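/- Let G be a Garside group of finite type and x, α, γ ∈ G with inf(x^γ) ≤ inf(x^α) and sup(x^γ) ≥ sup(x^α). If α ≼ γ, then α^{(1)} ≼ γ^{(1)}, where α^{(1)} and γ^{(1)} are the transports of α and γ at x. -/

import Mathlib

namespace GarsidePaper

/-- A Garside structure of finite type on a group `G`: a positive submonoid `P` with
`P ∩ P⁻¹ = {1}`, a Garside element `Δ ∈ P`, the prefix order `a ≼ b ↔ a⁻¹b ∈ P`
a lattice order (with meet `wedge` and join `vee`), the simple elements `[1,Δ]`
generating `G` and being finite, `Δ⁻¹PΔ = P`, a finite norm on positive elements,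
and the infimum and supremum functions `inf`, `sup` characterised by
`Δ^(inf x) ≼ x ≼ Δ^(sup x)` with `inf x` maximal and `sup x` minimal. -/
structure Garside (G : Type*) [Group G] where
  P : Submonoid G
  Δ : G
  purity : ∀ a : G, a ∈ P → a⁻¹ ∈ P → a = 1
  delta_mem : Δ ∈ P
  wedge : G → G → G
  vee : G → G → G
  wedge_le_left : ∀ a b : G, (wedge a b)⁻¹ * a ∈ P
  wedge_le_right : ∀ a b : G, (wedge a b)⁻¹ * b ∈ P
  le_wedge : ∀ a b c : G, c⁻¹ * a ∈ P → c⁻¹ * b ∈ P → c⁻¹ * wedge a b ∈ P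
  le_vee_left : ∀ a b : G, a⁻¹ * vee a b ∈ P
  le_vee_right : ∀ a b : G, b⁻¹ * vee a b ∈ P
  vee_le : ∀ a b c : G, a⁻¹ * c ∈ P → b⁻¹ * c ∈ P → (vee a b)⁻¹ * c ∈ P
  simples_generate : Subgroup.closure {a : G | a ∈ P ∧ a⁻¹ * Δ ∈ P} = (⊤ : Subgroup G)
  conj_pos : ∀ a : G, a ∈ P → Δ⁻¹ * a * Δ ∈ P
  norm : G → ℕ
  norm_exists : ∀ x : G, x ∈ P → x ≠ 1 →
    ∃ l : List G, (∀ s ∈ l, s ∈ P ∧ s ≠ 1) ∧ l.prod = x ∧ l.length = norm x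
  norm_max : ∀ x : G, x ∈ P → x ≠ 1 →
    ∀ l : List G, (∀ s ∈ l, s ∈ P ∧ s ≠ 1) → l.prod = x → l.length ≤ norm x
  simples_finite : Set.Finite {a : G | a ∈ P ∧ a⁻¹ * Δ ∈ P}
  inf : G → ℤ
  sup : G → ℤ
  inf_le : ∀ x : G, (Δ ^ inf x)⁻¹ * x ∈ P
  inf_max : ∀ (x : G) (p : ℤ), (Δ ^ p)⁻¹ * x ∈ P → p ≤ inf x
  le_sup : ∀ x : G, x⁻¹ * Δ ^ sup x ∈ P
  sup_min : ∀ (x : G) (q : ℤ), x⁻¹ * Δ ^ q ∈ P → sup x ≤ q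

namespace Garside

variable {G : Type*} [Group G]

/-- The prefix order `a ≼ b`. -/
def le (S : Garside G) (a b : G) : Prop := a⁻¹ * b ∈ S.P

/-- The canonical length `ℓ(x) = sup(x) - inf(x)`. -/
def len (S : Garside G) (x : G) : ℤ := S.sup x - S.inf x

/-- The initial factor `ι(x) = (x Δ^(-inf x)) ∧ Δ`. -/
def iota (S : Garside G) (x : G) : G := S.wedge (x * S.Δ ^ (-S.inf x)) S.Δ

/-- The preferred prefix `𝔭(x) = ι(x) ∧ ι(x⁻¹)`. -/
def pp (S : Garside G) (x : G) : G := S.wedge (S.iota x) (S.iota x⁻¹)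

/-- Cyclic sliding `𝔰(x) = 𝔭(x)⁻¹ x 𝔭(x)`. -/
def sl (S : Garside G) (x : G) : G := (S.pp x)⁻¹ * x * S.pp x

/-- The final factor `φ(x) = (Δ^(sup x - 1) ∧ x)⁻¹ x`. -/
def phi (S : Garside G) (x : G) : G := (S.wedge (S.Δ ^ (S.sup x - 1)) x)⁻¹ * x

/-- Conjugation by `Δ`: `τ(x) = Δ⁻¹ x Δ`. -/
def tau (S : Garside G) (x : G) : G := S.Δ⁻¹ * x * S.Δ

/-- Cycling `c(x) = ι(x)⁻¹ x ι(x)`. -/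
def cyc (S : Garside G) (x : G) : G := (S.iota x)⁻¹ * x * S.iota x

/-- Decycling `d(x) = φ(x) x φ(x)⁻¹`. -/
def dec (S : Garside G) (x : G) : G := S.phi x * x * (S.phi x)⁻¹

/-- The transport `α^{(1)} = 𝔭(x)⁻¹ α 𝔭(x^α)` of `α` at `x`. -/
def transport (S : Garside G) (x α : G) : G := (S.pp x)⁻¹ * α * S.pp (α⁻¹ * x * α)

/-- The iterated transport: `itTransport x i α = α^{(i)}`, the transport of `α^{(i-1)}`
at `𝔰^{i-1}(x)`, with `α^{(0)} = α`. -/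
def itTransport (S : Garside G) (x : G) : ℕ → G → G
  | 0, α => α
  | i + 1, α => S.transport ((S.sl)^[i] x) (S.itTransport x i α)

/-- `𝔓_i(x) = 𝔭(x) 𝔭(𝔰(x)) ⋯ 𝔭(𝔰^{i-1}(x))`, with `𝔓₀(x) = 1`. -/
def PP (S : Garside G) (x : G) : ℕ → G
  | 0 => 1
  | i + 1 => S.PP x i * S.pp ((S.sl)^[i] x)

/-- The summit set `SS(x)`. -/
def SS (S : Garside G) (x : G) : Set G :=
  {y | IsConj x y ∧ ∀ z : G, IsConj x z → S.inf z ≤ S.inf y}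

/-- The super summit set `SSS(x)`. -/
def SSS (S : Garside G) (x : G) : Set G :=
  {y | IsConj x y ∧ (∀ z : G, IsConj x z → S.inf z ≤ S.inf y) ∧
       (∀ z : G, IsConj x z → S.sup y ≤ S.sup z)}

/-- The ultra summit set `USS(x)`. -/
def USS (S : Garside G) (x : G) : Set G :=
  {y | y ∈ S.SSS x ∧ ∃ m : ℕ, 1 ≤ m ∧ (S.cyc)^[m] y = y}

/-- The reduced super summit set `RSSS(x)`. -/
def RSSS (S : Garside G) (x : G) : Set G :=
  {y | IsConj x y ∧ (∃ m : ℕ, 1 ≤ m ∧ (S.cyc)^[m] y = y) ∧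
       (∃ n : ℕ, 1 ≤ n ∧ (S.dec)^[n] y = y)}

/-- The set of sliding circuits `SC(x)`. -/
def SC (S : Garside G) (x : G) : Set G :=
  {y | IsConj x y ∧ ∃ m : ℕ, 1 ≤ m ∧ (S.sl)^[m] y = y}

end Garside

/-!
Write `y = x^α`, `c = α⁻¹γ ∈ P`, so that `x^γ = c⁻¹ y c` and the claim reads
`𝔭(y) ≼ c 𝔭(c⁻¹ y c)`. Since `c` is positive and conjugating by it does not raise `inf`,
`ι(y) ≼ y Δ^(-inf y) ≼ c (c⁻¹ y c) Δ^(-inf (c⁻¹ y c))`, and `ι(y) ≼ Δ ≼ c Δ`; hence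
`ι(y) ≼ c ι(c⁻¹ y c)`. As `inf (y⁻¹) = -sup y`, the hypothesis on `sup` gives the same for
`y⁻¹`, and taking meets gives the claim.

The middle step needs `Δ^n P Δ^(-n) ⊆ P` for every integer `n`, while only `Δ⁻¹ P Δ ⊆ P` is
assumed. Conjugation by `Δ` permutes the finite set of simple elements, so some power of
it fixes all of them; as they generate `G`, a positive power of `Δ` is central.
-/

namespace Garside

variable {G : Type*} [Group G] (S : Garside G)

section PrefixOrder

variable {a b c : G}

lemma le_trans (hab : S.le a b) (hbc : S.le b c) : S.le a c := by
  simpa [le, mul_assoc] using S.P.mul_mem hab hbc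

lemma le_mul_of_mem (a : G) {u : G} (hu : u ∈ S.P) : S.le a (a * u) := by
  simpa [le] using hu

lemma mul_le_mul_left_iff (c : G) : S.le (c * a) (c * b) ↔ S.le a b := by
  simp [le, mul_assoc]

lemma le_mul_iff_inv_mul_le : S.le a (c * b) ↔ S.le (c⁻¹ * a) b := by
  simp [le, mul_assoc]

end PrefixOrder

def simples : Set G := {a : G | a ∈ S.P ∧ a⁻¹ * S.Δ ∈ S.P}

lemma conj_delta_mem_simples {s : G} (hs : s ∈ S.simples) : S.Δ⁻¹ * s * S.Δ ∈ S.simples := by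
  refine ⟨S.conj_pos s hs.1, ?_⟩
  convert S.conj_pos _ hs.2 using 1
  group

lemma exists_pow_delta_mem_center : ∃ N : ℕ, 0 < N ∧ S.Δ ^ N ∈ Subgroup.center G := by
  have hmaps : Set.MapsTo (fun a => S.Δ⁻¹ * a * S.Δ) S.simples S.simples :=
    fun _ hs => S.conj_delta_mem_simples hs
  have hinj : Function.Injective (hmaps.restrict _ _ _) :=
    hmaps.restrict_inj.2 fun a _ b _ hab => by simpa using hab
  have : Finite S.simples := S.simples_finite.to_subtype
  let σ : Equiv.Perm S.simples :=
    Equiv.ofBijective _ (Finite.injective_iff_bijective.1 hinj)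
  have hσ : ∀ (n : ℕ) (s : S.simples), ((σ ^ n) s : G) = (S.Δ ^ n)⁻¹ * s * S.Δ ^ n := by
    intro n s
    induction n with
    | zero => simp
    | succ n ih =>
      rw [pow_succ', Equiv.Perm.mul_apply]
      change S.Δ⁻¹ * ((σ ^ n) s : G) * S.Δ = _
      rw [ih, pow_succ]
      group
  have htop : Subgroup.centralizer {S.Δ ^ orderOf σ} = ⊤ := by
    refine top_unique (S.simples_generate ▸ (Subgroup.closure_le _).2 fun s hs => ?_)
    have hfix := hσ (orderOf σ) ⟨s, hs⟩
    rw [pow_orderOf_eq_one] at hfix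
    rw [SetLike.mem_coe, Subgroup.mem_centralizer_singleton_iff]
    calc s * S.Δ ^ orderOf σ
        = S.Δ ^ orderOf σ * ((S.Δ ^ orderOf σ)⁻¹ * s * S.Δ ^ orderOf σ) := by group
      _ = S.Δ ^ orderOf σ * s := by rw [← hfix]; rfl
  exact ⟨orderOf σ, orderOf_pos σ,
    Subgroup.centralizer_eq_top_iff_subset.1 htop (Set.mem_singleton _)⟩

lemma pow_conj_delta_mem (n : ℕ) {a : G} (ha : a ∈ S.P) : (S.Δ ^ n)⁻¹ * a * S.Δ ^ n ∈ S.P := by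
  induction n with
  | zero => simpa using ha
  | succ n ih =>
    convert S.conj_pos _ ih using 1
    rw [pow_succ']
    group

/-- Conjugation by `Δ ^ n` only depends on `n` modulo the `N` with `Δ ^ N` central. -/
lemma zpow_conj_delta_mem (n : ℤ) {a : G} (ha : a ∈ S.P) :
    (S.Δ ^ n)⁻¹ * a * S.Δ ^ n ∈ S.P := by
  obtain ⟨N, hN, hcen⟩ := S.exists_pow_delta_mem_center
  have hz : S.Δ ^ ((N : ℤ) * (n / N)) ∈ Subgroup.center G := by
    rw [zpow_mul, zpow_natCast]
    exact Subgroup.zpow_mem _ hcen _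
  set z := S.Δ ^ ((N : ℤ) * (n / N))
  obtain ⟨r, hr⟩ := Int.eq_ofNat_of_zero_le (Int.emod_nonneg n (by omega : (N : ℤ) ≠ 0))
  have hn : S.Δ ^ n = z * S.Δ ^ r := by
    rw [← zpow_natCast, ← hr, ← zpow_add, Int.mul_ediv_add_emod]
  have hza : z⁻¹ * a * z = a := by
    rw [mul_assoc, Subgroup.mem_center_iff.1 hz a, inv_mul_cancel_left]
  have hreduce : (S.Δ ^ n)⁻¹ * a * S.Δ ^ n = (S.Δ ^ r)⁻¹ * (z⁻¹ * a * z) * S.Δ ^ r := by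
    rw [hn]; group
  rw [hreduce, hza]
  exact S.pow_conj_delta_mem r ha

lemma zpow_delta_mem {n : ℤ} (hn : 0 ≤ n) : S.Δ ^ n ∈ S.P := by
  obtain ⟨k, rfl⟩ := Int.eq_ofNat_of_zero_le hn
  rw [zpow_natCast]
  exact S.P.pow_mem S.delta_mem k

lemma inf_inv (y : G) : S.inf y⁻¹ = -S.sup y := by
  apply le_antisymm
  · have h := S.zpow_conj_delta_mem (-S.inf y⁻¹) (S.inf_le y⁻¹)
    have hsup := S.sup_min y (-S.inf y⁻¹) (by convert h using 1; group)
    omega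
  · refine S.inf_max y⁻¹ _ ?_
    convert S.zpow_conj_delta_mem (-S.sup y) (S.le_sup y) using 1
    group

lemma iota_le_mul_iota {y c : G} (hc : c ∈ S.P) (hinf : S.inf (c⁻¹ * y * c) ≤ S.inf y) :
    S.le (S.iota y) (c * S.iota (c⁻¹ * y * c)) := by
  rw [le_mul_iff_inv_mul_le]
  apply S.le_wedge
  · show S.le _ _
    rw [← le_mul_iff_inv_mul_le]
    have hfactor : c * (c⁻¹ * y * c * S.Δ ^ (-S.inf (c⁻¹ * y * c))) =
        y * S.Δ ^ (-S.inf y) * ((S.Δ ^ (-S.inf y))⁻¹ * c * S.Δ ^ (-S.inf y) *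
          S.Δ ^ (S.inf y - S.inf (c⁻¹ * y * c))) := by
      group
    rw [hfactor]
    refine S.le_trans (S.wedge_le_left _ _) (S.le_mul_of_mem _ (S.P.mul_mem ?_ ?_))
    · exact S.zpow_conj_delta_mem _ hc
    · exact S.zpow_delta_mem (by omega)
  · show S.le _ _
    rw [← le_mul_iff_inv_mul_le]
    have hfactor : c * S.Δ = S.Δ * (S.Δ⁻¹ * c * S.Δ) := by group
    rw [hfactor]
    exact S.le_trans (S.wedge_le_right _ _) (S.le_mul_of_mem _ (S.conj_pos c hc))

lemma pp_le_mul_pp {y c : G} (hc : c ∈ S.P) (hinf : S.inf (c⁻¹ * y * c) ≤ S.inf y)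
    (hsup : S.sup y ≤ S.sup (c⁻¹ * y * c)) :
    S.le (S.pp y) (c * S.pp (c⁻¹ * y * c)) := by
  have hinv : c⁻¹ * y⁻¹ * c = (c⁻¹ * y * c)⁻¹ := by group
  have hinf' : S.inf (c⁻¹ * y⁻¹ * c) ≤ S.inf y⁻¹ := by
    rw [hinv, S.inf_inv, S.inf_inv]
    omega
  have hι := S.iota_le_mul_iota hc hinf
  have hι' := S.iota_le_mul_iota hc hinf'
  rw [hinv] at hι'
  rw [le_mul_iff_inv_mul_le] at hι hι' ⊢
  apply S.le_wedge
  · exact S.le_trans ((S.mul_le_mul_left_iff c⁻¹).2 (S.wedge_le_left _ _)) hι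
  · exact S.le_trans ((S.mul_le_mul_left_iff c⁻¹).2 (S.wedge_le_right _ _)) hι'

end Garside

open Garside in
theorem statement9 {G : Type*} [Group G] (S : Garside G) (x α γ : G)
    (h1 : S.inf (γ⁻¹ * x * γ) ≤ S.inf (α⁻¹ * x * α))
    (h2 : S.sup (α⁻¹ * x * α) ≤ S.sup (γ⁻¹ * x * γ))
    (h : S.le α γ) : S.le (S.transport x α) (S.transport x γ) := by
  have hconj : (α⁻¹ * γ)⁻¹ * (α⁻¹ * x * α) * (α⁻¹ * γ) = γ⁻¹ * x * γ := by group
  have key := S.pp_le_mul_pp (y := α⁻¹ * x * α) h (hconj ▸ h1) (hconj ▸ h2)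
  rw [hconj] at key
  have hγ : S.transport x γ = (S.pp x)⁻¹ * α * ((α⁻¹ * γ) * S.pp (γ⁻¹ * x * γ)) := by
    unfold transport; group
  rw [hγ, transport, mul_le_mul_left_iff]
  exact key

end GarsidePaper
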